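/- The coupling matrix of the mixed Legendre–Galerkin method has the explicit form: for all i, j ≥ 1, ∫_{-1}^{1} L̃_j(x)·L_{i−1}(x) dx equals √2/((2i−1)·√(2i+1)) if i = j, equals −√2/((2j+3)·√(2j+1)) if i = j+2, and equals 0 otherwise. -/

import Mathlib

/-!
The entry is `(I (j-1) (i-1) - I (j+1) (i-1)) / √(4j+2)` with `I m n = ∫ L_m L_n`, so everything
reduces to the orthogonality relations `I m n = δ_{mn} · 2/(2n+1)`, which follow from the
three-term recurrence alone. Multiplication by `x` is symmetric, so expanding `∫ L_m · x L_n` by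
the recurrence on either factor expresses row `m+1` of `I` through rows `m` and `m-1`. Row `0`
is `∫ L_n = 2 δ_{n0}`: for `n ≥ 1`, `(2n+1) L_n = (L_{n+1} - L_{n-1})'` and `L_k(±1) = (±1)^k`.
-/

open Polynomial

/-- The Legendre polynomials, defined by the three-term recurrence
`L₀ = 1`, `L₁ = X`, `(k+2)·L_{k+2} = (2k+3)·X·L_{k+1} − (k+1)·L_k`. -/
noncomputable def legendre : ℕ → Polynomial ℝ
  | 0 => 1
  | 1 => Polynomial.X
  | (k + 2) =>
      Polynomial.C ((2 * (k : ℝ) + 3) / ((k : ℝ) + 2)) * (Polynomial.X * legendre (k + 1))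
        - Polynomial.C (((k : ℝ) + 1) / ((k : ℝ) + 2)) * legendre k

/-- The basis functions `L̃_k = (L_{k−1} − L_{k+1})/√(4k+2)`, for `k ≥ 1`. -/
noncomputable def legendreTilde (k : ℕ) : Polynomial ℝ :=
  Polynomial.C (1 / Real.sqrt (4 * (k : ℝ) + 2)) * (legendre (k - 1) - legendre (k + 1))

open intervalIntegral

lemma legendre_add_two_eval (n : ℕ) (x : ℝ) :
    ((n : ℝ) + 2) * (legendre (n + 2)).eval x
      = (2 * n + 3) * x * (legendre (n + 1)).eval x - (n + 1) * (legendre n).eval x := by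
  simp only [legendre, eval_sub, eval_mul, eval_C, eval_X]
  field_simp

lemma X_mul_legendre_eval (n : ℕ) (x : ℝ) :
    (2 * n + 1) * x * (legendre n).eval x
      = (n + 1) * (legendre (n + 1)).eval x + n * (legendre (n - 1)).eval x := by
  rcases n with _ | n
  · simp [legendre]
  · have := legendre_add_two_eval n x
    push_cast
    linear_combination -this

lemma legendre_eval_one (n : ℕ) : (legendre n).eval 1 = 1 := by
  induction n using Nat.twoStepInduction with
  | zero => simp [legendre]
  | one => simp [legendre]
  | more n ih₀ ih₁ =>
    have := legendre_add_two_eval n 1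
    rw [ih₀, ih₁] at this
    have hn : ((n : ℝ) + 2) ≠ 0 := by positivity
    apply mul_left_cancel₀ hn
    linear_combination this

lemma legendre_eval_neg_one (n : ℕ) : (legendre n).eval (-1) = (-1) ^ n := by
  induction n using Nat.twoStepInduction with
  | zero => simp [legendre]
  | one => simp [legendre]
  | more n ih₀ ih₁ =>
    have := legendre_add_two_eval n (-1)
    rw [ih₀, ih₁] at this
    have hn : ((n : ℝ) + 2) ≠ 0 := by positivity
    apply mul_left_cancel₀ hn
    linear_combination this

lemma derivative_legendre_succ_relations (n : ℕ) (x : ℝ) :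
    (derivative (legendre (n + 1))).eval x
        = x * (derivative (legendre n)).eval x + (n + 1) * (legendre n).eval x ∧
      x * (derivative (legendre (n + 1))).eval x - (derivative (legendre n)).eval x
        = (n + 1) * (legendre (n + 1)).eval x := by
  induction n with
  | zero => simp [legendre]
  | succ n ih =>
    obtain ⟨hA, hB⟩ := ih
    have hrec := legendre_add_two_eval n x
    have hn : ((n : ℝ) + 2) ≠ 0 := by positivity
    have hD : ((n : ℝ) + 2) * (derivative (legendre (n + 2))).eval x
        = (2 * n + 3) * ((legendre (n + 1)).eval x + x * (derivative (legendre (n + 1))).eval x)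
          - (n + 1) * (derivative (legendre n)).eval x := by
      simp only [legendre, derivative_sub, derivative_mul, derivative_C, derivative_X,
        eval_sub, eval_mul, eval_add, eval_C, eval_X, eval_one, eval_zero]
      field_simp
      ring
    push_cast
    constructor
    · apply mul_left_cancel₀ hn
      linear_combination hD + (n + 1) * hB
    · apply mul_left_cancel₀ hn
      linear_combination x * hD + (2 * n + 3) * x * hB - (n + 2) * hA - (n + 2) * hrec

lemma derivative_legendre_add_two_sub_eval (n : ℕ) (x : ℝ) :
    (derivative (legendre (n + 2))).eval x - (derivative (legendre n)).eval x
      = (2 * n + 3) * (legendre (n + 1)).eval x := by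
  have hA := (derivative_legendre_succ_relations (n + 1) x).1
  have hB := (derivative_legendre_succ_relations n x).2
  push_cast at hA
  linear_combination hA + hB

lemma integral_legendre (n : ℕ) :
    ∫ x in (-1 : ℝ)..1, (legendre n).eval x = if n = 0 then 2 else 0 := by
  rcases n with _ | n
  · norm_num [legendre]
  · set p := legendre (n + 2) - legendre n
    have hFTC : ∫ x in (-1 : ℝ)..1, (derivative p).eval x = p.eval 1 - p.eval (-1) :=
      integral_eq_sub_of_hasDerivAt (fun x _ => p.hasDerivAt x)
        ((derivative p).continuous.intervalIntegrable _ _)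
    simp only [p, derivative_sub, eval_sub, derivative_legendre_add_two_sub_eval,
      integral_const_mul, legendre_eval_one, legendre_eval_neg_one] at hFTC
    rw [if_neg n.succ_ne_zero]
    have h : (2 * (n : ℝ) + 3) ≠ 0 := by positivity
    simpa [pow_succ, h] using hFTC

lemma integral_mul_X_mul_legendre (n : ℕ) (q : ℝ[X]) :
    (2 * n + 1) * ∫ x in (-1 : ℝ)..1, q.eval x * (x * (legendre n).eval x)
      = (n + 1) * (∫ x in (-1 : ℝ)..1, q.eval x * (legendre (n + 1)).eval x)
        + n * ∫ x in (-1 : ℝ)..1, q.eval x * (legendre (n - 1)).eval x := by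
  rw [← integral_const_mul, ← integral_const_mul, ← integral_const_mul, ← integral_add]
  · congr 1
    ext x
    linear_combination q.eval x * X_mul_legendre_eval n x
  all_goals exact Continuous.intervalIntegrable (by fun_prop) _ _

theorem integral_legendre_mul_legendre (m n : ℕ) :
    ∫ x in (-1 : ℝ)..1, (legendre m).eval x * (legendre n).eval x
      = if m = n then (2 / (2 * n + 1) : ℝ) else 0 := by
  induction m using Nat.strong_induction_on generalizing n with
  | _ m ih =>
    rcases m with _ | m
    · simp only [legendre, eval_one, one_mul, integral_legendre]
      rcases n with _ | n <;> simp
    · have hsymm : ∀ a b, ∫ x in (-1 : ℝ)..1, (legendre a).eval x * (legendre b).eval x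
          = ∫ x in (-1 : ℝ)..1, (legendre b).eval x * (legendre a).eval x := fun a b => by
        simp only [mul_comm]
      have hxsymm : ∫ x in (-1 : ℝ)..1, (legendre n).eval x * (x * (legendre m).eval x)
          = ∫ x in (-1 : ℝ)..1, (legendre m).eval x * (x * (legendre n).eval x) := by
        congr 1; ext x; ring
      have h₁ := integral_mul_X_mul_legendre m (legendre n)
      have h₂ := integral_mul_X_mul_legendre n (legendre m)
      rw [hxsymm, hsymm n (m + 1), hsymm n (m - 1), ih (m - 1) (by omega)] at h₁
      rw [ih m (by omega), ih m (by omega)] at h₂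
      have hm : ((m : ℝ) + 1) ≠ 0 := by positivity
      have hn : (2 * (n : ℝ) + 1) ≠ 0 := by positivity
      rw [eq_div_of_mul_eq hn ((mul_comm _ _).trans h₂)] at h₁
      rw [eq_div_of_mul_eq hm ((mul_comm _ _).trans (eq_sub_of_add_eq h₁.symm))]
      split_ifs <;> (try omega)
      · obtain rfl : m = n + 1 := by omega
        push_cast
        field_simp
        ring
      -- `m - 1 = n` and `m = n - 1` by truncated subtraction only; their coefficients `m, n` vanish.
      · obtain ⟨rfl, rfl⟩ : m = 0 ∧ n = 0 := by omega
        norm_num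
      · obtain rfl : n = m + 1 := by omega
        push_cast [Nat.add_sub_cancel]
        field_simp
        ring
      · simp

lemma integral_legendreTilde_mul_legendre (k n : ℕ) :
    ∫ x in (-1 : ℝ)..1, (legendreTilde k).eval x * (legendre n).eval x
      = ((if k - 1 = n then (2 / (2 * n + 1) : ℝ) else 0)
          - if k + 1 = n then (2 / (2 * n + 1) : ℝ) else 0) / Real.sqrt (4 * k + 2) := by
  simp only [legendreTilde, eval_mul, eval_C, eval_sub, sub_mul, mul_assoc]
  rw [integral_const_mul, integral_sub, integral_legendre_mul_legendre,
    integral_legendre_mul_legendre]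
  · ring
  all_goals exact Continuous.intervalIntegrable (by fun_prop) _ _

lemma two_div_sqrt_four_mul_add_two (x : ℝ) :
    2 / Real.sqrt (4 * x + 2) = Real.sqrt 2 / Real.sqrt (2 * x + 1) := by
  rw [show 4 * x + 2 = 2 * (2 * x + 1) by ring, Real.sqrt_mul zero_le_two, ← div_div,
    Real.div_sqrt]

theorem mixed_coupling_matrix :
    ∀ i j : ℕ, 1 ≤ i → 1 ≤ j →
      (∫ x in (-1 : ℝ)..1, (legendreTilde j).eval x * (legendre (i - 1)).eval x)
        = if i = j then Real.sqrt 2 / ((2 * (i : ℝ) - 1) * Real.sqrt (2 * (i : ℝ) + 1))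
          else if i = j + 2 then
            -Real.sqrt 2 / ((2 * (j : ℝ) + 3) * Real.sqrt (2 * (j : ℝ) + 1))
          else 0 := by
  intro i j hi hj
  rw [integral_legendreTilde_mul_legendre]
  have hsqrt := two_div_sqrt_four_mul_add_two (j : ℝ)
  split_ifs <;> (try omega)
  · subst i
    push_cast [Nat.cast_sub hj]
    rw [sub_zero, div_right_comm, hsqrt, div_div, mul_comm]
    congr 2
    ring
  · subst i
    push_cast [Nat.add_sub_cancel]
    rw [zero_sub, neg_div, div_right_comm, hsqrt, div_div, mul_comm]
    ring
  · simp
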